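/- Let c be a diffusion coefficient on [0,H] with bounds c_m ≤ c ≤ c_M, let ε > 0, and let μ, λ > 0 satisfy λ ≥ (c_M + ε) μ². Let u be a reduced eigenfunction for (c, μ, λ). If z < z' are zeros of u in [0,H] with u(y) ≠ 0 for all y ∈ (z, z'), then z' − z ≤ 2π μ⁻¹ √(c_M/ε). -/

import Mathlib

open Set MeasureTheory Filter

/-- `u` (with derivative `u'`) is a reduced eigenfunction for `(c, μ, lam)` on `[0,H]`. -/
def ReducedEigenfunction (H : ℝ) (c : ℝ → ℝ) (μ lam : ℝ) (u u' : ℝ → ℝ) : Prop :=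
  (∀ y ∈ Set.Icc (0:ℝ) H, HasDerivWithinAt u (u' y) (Set.Icc (0:ℝ) H) y) ∧
  ContinuousOn u' (Set.Icc (0:ℝ) H) ∧
  (∀ y ∈ Set.Icc (0:ℝ) H, u' y = u' 0 - ∫ t in (0:ℝ)..y, (lam / c t - μ ^ 2) * u t) ∧
  (∃ y ∈ Set.Icc (0:ℝ) H, u y ≠ 0) ∧
  u 0 = 0 ∧ u H = 0

/-!
On a nodal interval `(z, z')` we may take `u > 0` after multiplying by a sign. There the
equation says, in integrated form, `u'' = -(λ / c - μ²) u ≤ -k² u` with `k = μ / √(c_M / ε)`,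
so `u` is concave. At an interior maximum `y₀` we have `u'(y₀) = 0`, so `u` decreases on
`[y₀, z']` and `u ≥ m := u(midpoint)` on the first half of `[y₀, z']`; hence
`u' ≤ -k² m (z' - y₀) / 2` on the second half, and integrating to `u(z') = 0` gives
`k (z' - y₀) ≤ 2`. Reflecting gives `k (y₀ - z) ≤ 2`, so `z' - z ≤ 4 / k ≤ 2π / k`.
-/

theorem IsPreconnected.exists_pos_mul_of_ne_zero {X : Type*} [TopologicalSpace X] {s : Set X}
    {f : X → ℝ} (hs : IsPreconnected s) (hf : ContinuousOn f s) (hne : ∀ x ∈ s, f x ≠ 0) :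
    ∃ σ : ℝ, ∀ x ∈ s, 0 < σ * f x := by
  by_cases hpos : ∀ x ∈ s, 0 < f x
  · exact ⟨1, by simpa using hpos⟩
  obtain ⟨a, ha, hfa⟩ : ∃ a ∈ s, f a ≤ 0 := by simpa using hpos
  refine ⟨-1, fun b hb => ?_⟩
  by_contra! hfb
  obtain ⟨x, hx, hfx⟩ := hs.intermediate_value ha hb hf ⟨hfa, by linarith⟩
  exact hne x hx hfx

theorem sub_le_two_div_of_deriv_le_neg_integral {a b k : ℝ} {v v' : ℝ → ℝ} (hk : 0 < k)
    (hab : a < b) (hv : ContinuousOn v (Icc a b)) (hderiv : ∀ y ∈ Ioo a b, HasDerivAt v (v' y) y)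
    (hbound : ∀ y ∈ Ioo a b, v' y ≤ -k ^ 2 * ∫ t in a..y, v t)
    (hpos : ∀ y ∈ Ico a b, 0 < v y) (hvb : v b = 0) : b - a ≤ 2 / k := by
  set m := (a + b) / 2 with hm_def
  have ham : a < m := by linarith
  have hmb : m < b := by linarith
  have hnonneg : ∀ y ∈ Icc a b, 0 ≤ v y := fun y hy =>
    hy.2.eq_or_lt.elim (fun h => h ▸ hvb.ge) (fun h => (hpos y ⟨hy.1, h⟩).le)
  have hint_mono : ∀ x y, a ≤ x → x ≤ y → y ≤ b → ∫ t in a..x, v t ≤ ∫ t in a..y, v t :=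
    fun x y hax hxy hyb => intervalIntegral.integral_mono_interval le_rfl hax hxy
      (ae_restrict_of_forall_mem measurableSet_Ioc fun t ht => hnonneg t ⟨ht.1.le, ht.2.trans hyb⟩)
      (hv.mono (Icc_subset_Icc le_rfl hyb) |>.intervalIntegrable_of_Icc (hax.trans hxy))
  have hdiff : ∀ s ⊆ Ioo a b, DifferentiableOn ℝ v s := fun s hs y hy =>
    (hderiv y (hs hy)).differentiableAt.differentiableWithinAt
  have hanti : AntitoneOn v (Icc a b) := by
    refine antitoneOn_of_deriv_nonpos (convex_Icc a b) hv (hdiff _ interior_Icc.subset) ?_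
    intro y hy
    rw [interior_Icc] at hy
    rw [(hderiv y hy).deriv]
    have := hint_mono a y le_rfl hy.1.le hy.2.le
    rw [intervalIntegral.integral_same] at this
    nlinarith [hbound y hy]
  have hvm : 0 < v m := hpos m ⟨ham.le, hmb⟩
  have hleft : (m - a) * v m ≤ ∫ t in a..m, v t := by
    have := intervalIntegral.integral_mono_on ham.le
      (intervalIntegrable_const (μ := volume) (c := v m))
      (hv.mono (Icc_subset_Icc le_rfl hmb.le) |>.intervalIntegrable_of_Icc ham.le)
      fun t ht => hanti ⟨ht.1, ht.2.trans hmb.le⟩ ⟨ham.le, hmb.le⟩ ht.2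
    simpa using this
  have hslope : ∀ y ∈ Ioo m b, v' y ≤ -k ^ 2 * ((m - a) * v m) := fun y hy => by
    have := hint_mono m y ham.le hy.1.le hy.2.le
    nlinarith [hbound y ⟨ham.trans hy.1, hy.2⟩, sq_nonneg k]
  have hdrop : v b - v m ≤ -k ^ 2 * ((m - a) * v m) * (b - m) := by
    refine (convex_Icc m b).image_sub_le_mul_sub_of_deriv_le
      (hv.mono (Icc_subset_Icc ham.le le_rfl))
      (hdiff _ (interior_Icc.subset.trans (Ioo_subset_Ioo_left ham.le))) (fun y hy => ?_)
      m ⟨le_rfl, hmb.le⟩ b ⟨hmb.le, le_rfl⟩ hmb.le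
    rw [interior_Icc] at hy
    rw [(hderiv y ⟨ham.trans hy.1, hy.2⟩).deriv]
    exact hslope y hy
  have hsq : (k * (b - a)) ^ 2 ≤ 4 := by
    rw [hvb, hm_def] at hdrop
    nlinarith
  rw [le_div_iff₀ hk]
  nlinarith [mul_pos hk (sub_pos.2 hab)]

theorem sub_le_two_div_of_deriv_eq_zero {a b k y₀ : ℝ} {v v' : ℝ → ℝ} (hk : 0 < k)
    (hv : ContinuousOn v (Icc a b)) (hderiv : ∀ y ∈ Ioo a b, HasDerivAt v (v' y) y)
    (hconc : ∀ x ∈ Ioo a b, ∀ y ∈ Ioo a b, x ≤ y → k ^ 2 * ∫ t in x..y, v t ≤ v' x - v' y)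
    (hpos : ∀ y ∈ Ioo a b, 0 < v y) (hvb : v b = 0) (hy₀ : y₀ ∈ Ioo a b) (hv'y₀ : v' y₀ = 0) :
    b - y₀ ≤ 2 / k := by
  refine sub_le_two_div_of_deriv_le_neg_integral hk hy₀.2 (hv.mono (Icc_subset_Icc hy₀.1.le le_rfl))
    (fun y hy => hderiv y ⟨hy₀.1.trans hy.1, hy.2⟩) (fun y hy => ?_)
    (fun y hy => hpos y ⟨hy₀.1.trans_le hy.1, hy.2⟩) hvb
  have := hconc y₀ hy₀ y ⟨hy₀.1.trans hy.1, hy.2⟩ hy.1.le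
  linarith

theorem sub_le_four_div_of_integral_le_deriv_sub {a b k : ℝ} {v v' : ℝ → ℝ} (hk : 0 < k)
    (hv : ContinuousOn v (Icc a b)) (hderiv : ∀ y ∈ Ioo a b, HasDerivAt v (v' y) y)
    (hconc : ∀ x ∈ Ioo a b, ∀ y ∈ Ioo a b, x ≤ y → k ^ 2 * ∫ t in x..y, v t ≤ v' x - v' y)
    (hpos : ∀ y ∈ Ioo a b, 0 < v y) (hab : a < b) (hva : v a = 0) (hvb : v b = 0) :
    b - a ≤ 4 / k := by
  obtain ⟨y₀, hy₀_mem, hmax⟩ := isCompact_Icc.exists_isMaxOn (nonempty_Icc.2 hab.le) hv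
  have hmid : (a + b) / 2 ∈ Ioo a b := ⟨by linarith, by linarith⟩
  have hvy₀ : 0 < v y₀ := (hpos _ hmid).trans_le (hmax (Ioo_subset_Icc_self hmid))
  have hy₀ : y₀ ∈ Ioo a b :=
    ⟨hy₀_mem.1.lt_of_ne (by rintro rfl; linarith), hy₀_mem.2.lt_of_ne (by rintro rfl; linarith)⟩
  have hv'y₀ : v' y₀ = 0 :=
    (hmax.isLocalMax (Icc_mem_nhds hy₀.1 hy₀.2)).hasDerivAt_eq_zero (hderiv y₀ hy₀)
  have hright := sub_le_two_div_of_deriv_eq_zero hk hv hderiv hconc hpos hvb hy₀ hv'y₀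
  have hleft : -a - -y₀ ≤ 2 / k := by
    have hneg : ∀ s ∈ Ioo (-b) (-a), -s ∈ Ioo a b := fun s hs =>
      ⟨by linarith [hs.2], by linarith [hs.1]⟩
    refine sub_le_two_div_of_deriv_eq_zero (v := fun s => v (-s)) (v' := fun s => -v' (-s)) hk
      (hv.comp continuousOn_neg fun s hs => ⟨by linarith [hs.2], by linarith [hs.1]⟩)
      (fun s hs => ((hderiv (-s) (hneg s hs)).comp s (hasDerivAt_neg' s)).congr_deriv (by ring))
      (fun x hx y hy hxy => ?_) (fun s hs => hpos (-s) (hneg s hs)) (by simpa using hva)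
      ⟨neg_lt_neg hy₀.2, neg_lt_neg hy₀.1⟩ (by simpa using hv'y₀)
    rw [intervalIntegral.integral_comp_neg]
    have := hconc (-y) (hneg y hy) (-x) (hneg x hx) (neg_le_neg hxy)
    linarith
  linarith [show 2 / k + 2 / k = 4 / k by ring]

theorem integrableOn_div_sub_mul {a b c_m lam μ : ℝ} {c u : ℝ → ℝ} (hmeas : Measurable c)
    (hcm : 0 < c_m) (hc : ∀ t ∈ Icc a b, c_m ≤ c t) (hu : ContinuousOn u (Icc a b)) :
    IntegrableOn (fun t => (lam / c t - μ ^ 2) * u t) (Icc a b) := by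
  refine (Measure.integrableOn_of_bounded (M := |lam| / c_m + μ ^ 2) measure_Icc_lt_top.ne
    (show Measurable fun t => lam / c t - μ ^ 2 by fun_prop).aestronglyMeasurable
    (ae_restrict_of_forall_mem measurableSet_Icc fun t ht => ?_)).mul_continuousOn
    hu isCompact_Icc
  have hct : 0 < c t := hcm.trans_le (hc t ht)
  calc ‖lam / c t - μ ^ 2‖ ≤ ‖lam / c t‖ + ‖μ ^ 2‖ := norm_sub_le _ _
    _ = |lam| / c t + μ ^ 2 := by
        rw [Real.norm_eq_abs, Real.norm_eq_abs, abs_div, abs_of_pos hct,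
          abs_of_nonneg (sq_nonneg μ)]
    _ ≤ |lam| / c_m + μ ^ 2 := by gcongr; exact hc t ht

theorem sq_div_sqrt_le_div_sub_sq {c_M ε μ lam C : ℝ} (hε : 0 < ε) (hC : 0 < C) (hCM : C ≤ c_M)
    (hlam : (c_M + ε) * μ ^ 2 ≤ lam) : (μ / √(c_M / ε)) ^ 2 ≤ lam / C - μ ^ 2 := by
  have hcM : 0 < c_M := hC.trans_le hCM
  rw [div_pow, Real.sq_sqrt (by positivity), div_div_eq_mul_div, le_sub_iff_add_le]
  calc μ ^ 2 * ε / c_M + μ ^ 2 = (c_M + ε) * μ ^ 2 / c_M := by field_simp; ring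
    _ ≤ lam / c_M := by gcongr
    _ ≤ lam / C := div_le_div_of_nonneg_left (le_trans (by positivity) hlam) hC hCM

theorem sq_mul_integral_le_sub_of_sub_eq_integral {q u u' : ℝ → ℝ} {k σ x y : ℝ} (hxy : x ≤ y)
    (hu : ContinuousOn u (Icc x y)) (hqu : IntervalIntegrable (fun t => q t * u t) volume x y)
    (heq : u' x - u' y = ∫ t in x..y, q t * u t) (hq : ∀ t ∈ Icc x y, k ^ 2 ≤ q t)
    (hσ : ∀ t ∈ Icc x y, 0 ≤ σ * u t) :
    k ^ 2 * ∫ t in x..y, σ * u t ≤ σ * u' x - σ * u' y := by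
  rw [← mul_sub, heq, ← intervalIntegral.integral_const_mul, ← intervalIntegral.integral_const_mul]
  refine intervalIntegral.integral_mono_on hxy
    ((continuousOn_const.mul (continuousOn_const.mul hu)).intervalIntegrable_of_Icc hxy)
    (hqu.const_mul σ) fun t ht => ?_
  rw [mul_left_comm σ]
  exact mul_le_mul_of_nonneg_right (hq t ht) (hσ t ht)

namespace ReducedEigenfunction

variable {H μ lam : ℝ} {c u u' : ℝ → ℝ}

theorem continuousOn (hu : ReducedEigenfunction H c μ lam u u') : ContinuousOn u (Icc 0 H) :=
  fun y hy => (hu.1 y hy).continuousWithinAt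

theorem hasDerivAt (hu : ReducedEigenfunction H c μ lam u u') {y : ℝ} (hy : y ∈ Ioo 0 H) :
    HasDerivAt u (u' y) y :=
  (hu.1 y (Ioo_subset_Icc_self hy)).hasDerivAt (Icc_mem_nhds hy.1 hy.2)

theorem deriv_sub_deriv_eq_integral (hu : ReducedEigenfunction H c μ lam u u')
    (hg : IntegrableOn (fun t => (lam / c t - μ ^ 2) * u t) (Icc 0 H)) {x y : ℝ}
    (hx : x ∈ Icc 0 H) (hy : y ∈ Icc 0 H) :
    u' x - u' y = ∫ t in x..y, (lam / c t - μ ^ 2) * u t := by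
  have hgi : ∀ y ∈ Icc 0 H,
      IntervalIntegrable (fun t => (lam / c t - μ ^ 2) * u t) volume 0 y := fun y hy =>
    (hg.mono_set (by rw [uIcc_of_le hy.1]; exact Icc_subset_Icc le_rfl hy.2)).intervalIntegrable
  rw [hu.2.2.1 x hx, hu.2.2.1 y hy,
    ← intervalIntegral.integral_interval_sub_left (hgi y hy) (hgi x hx)]
  ring

end ReducedEigenfunction

theorem stmt3_general
    (H c_m c_M ε μ lam z z' : ℝ) (c u u' : ℝ → ℝ)
    (hcm : 0 < c_m) (hε : 0 < ε)
    (hmeas : Measurable c)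
    (hbounds : ∀ y ∈ Set.Icc (0:ℝ) H, c_m ≤ c y ∧ c y ≤ c_M)
    (hμ : 0 < μ) (hlam : (c_M + ε) * μ ^ 2 ≤ lam)
    (hu : ReducedEigenfunction H c μ lam u u')
    (hz : z ∈ Set.Icc (0:ℝ) H) (hz' : z' ∈ Set.Icc (0:ℝ) H) (hzz' : z < z')
    (huz : u z = 0) (huz' : u z' = 0)
    (hne : ∀ y ∈ Set.Ioo z z', u y ≠ 0) :
    z' - z ≤ 2 * Real.pi * μ⁻¹ * Real.sqrt (c_M / ε) := by
  have hsub : Icc z z' ⊆ Icc 0 H := Icc_subset_Icc hz.1 hz'.2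
  have hg := integrableOn_div_sub_mul (lam := lam) (μ := μ) hmeas hcm (fun t ht => (hbounds t ht).1)
    hu.continuousOn
  have hcM : 0 < c_M := hcm.trans_le ((hbounds z hz).1.trans (hbounds z hz).2)
  set k := μ / √(c_M / ε) with hk_def
  have hk : 0 < k := by positivity
  obtain ⟨σ, hσ⟩ := isPreconnected_Ioo.exists_pos_mul_of_ne_zero
    (hu.continuousOn.mono (Ioo_subset_Icc_self.trans hsub)) hne
  have hbound : z' - z ≤ 4 / k := by
    refine sub_le_four_div_of_integral_le_deriv_sub (v' := fun y => σ * u' y) hk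
      (continuousOn_const.mul (hu.continuousOn.mono hsub))
      (fun y hy => (hu.hasDerivAt (Ioo_subset_Ioo hz.1 hz'.2 hy)).const_mul σ)
      (fun x hx y hy hxy => ?_) hσ hzz' (by simp [huz]) (by simp [huz'])
    have hxy_sub : Icc x y ⊆ Icc 0 H := (Icc_subset_Icc hx.1.le hy.2.le).trans hsub
    refine sq_mul_integral_le_sub_of_sub_eq_integral hxy (hu.continuousOn.mono hxy_sub)
      (hg.mono_set (by rwa [uIcc_of_le hxy])).intervalIntegrable
      (hu.deriv_sub_deriv_eq_integral hg (hxy_sub ⟨le_rfl, hxy⟩) (hxy_sub ⟨hxy, le_rfl⟩))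
      (fun t ht => ?_) fun t ht => (hσ t ⟨hx.1.trans_le ht.1, ht.2.trans_lt hy.2⟩).le
    obtain ⟨hmt, hMt⟩ := hbounds t (hxy_sub ht)
    exact sq_div_sqrt_le_div_sub_sq hε (hcm.trans_le hmt) hMt hlam
  calc z' - z ≤ 4 / k := hbound
    _ ≤ 2 * Real.pi / k := by gcongr; linarith [Real.pi_gt_three]
    _ = 2 * Real.pi * μ⁻¹ * Real.sqrt (c_M / ε) := by rw [hk_def]; field_simp

theorem stmt3
    (H c_m c_M ε μ lam z z' : ℝ) (c u u' : ℝ → ℝ)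
    (hH : 0 < H) (hcm : 0 < c_m) (hcmM : c_m ≤ c_M) (hε : 0 < ε)
    (hmeas : Measurable c)
    (hbounds : ∀ y ∈ Set.Icc (0:ℝ) H, c_m ≤ c y ∧ c y ≤ c_M)
    (hμ : 0 < μ) (hlam : (c_M + ε) * μ ^ 2 ≤ lam)
    (hu : ReducedEigenfunction H c μ lam u u')
    (hz : z ∈ Set.Icc (0:ℝ) H) (hz' : z' ∈ Set.Icc (0:ℝ) H) (hzz' : z < z')
    (huz : u z = 0) (huz' : u z' = 0)
    (hne : ∀ y ∈ Set.Ioo z z', u y ≠ 0) :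
    z' - z ≤ 2 * Real.pi * μ⁻¹ * Real.sqrt (c_M / ε) :=
  stmt3_general H c_m c_M ε μ lam z z' c u u' hcm hε hmeas hbounds hμ hlam hu hz hz' hzz' huz huz'
    hne
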